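/- arXiv:1804.05785 — 6 statements merged into one kernel-verified Lean document; each statement's English description precedes it below -/
import Mathlib

section
/- Fix e ∈ {1,…,T}, an integer l with −e ≤ l ≤ T−e−1, an integer s with 0 ≤ s < e, and a nonempty set C ⊆ {c ∈ ℕ : e+l < c ≤ T and s < c}. Assume parallel trends (PT) and no anticipation (NA). Then E[Y_{e+l} − Y_s | E = e] − E[Y_{e+l} − Y_s | E ∈ C] = CATT(e,l). (Core identity of Proposition 3: the population difference-in-differences contrast identifies the cohort-specific average treatment effect on the treated.) -/
open MeasureTheory Filter

noncomputable section

/-- Conditional expectation `E[Z | A] := E[Z·1_A] / P(A)` given an event `A`. -/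
def cexp {Ω : Type*} [MeasurableSpace Ω] (μ : Measure Ω) (Z : Ω → ℝ) (A : Set Ω) : ℝ :=
  (∫ ω in A, Z ω ∂μ) / (μ A).toReal

/-- Observed outcome `Y_t := Y∞_t + Σ_{e=1}^{T} (Yᵉ_t − Y∞_t)·1{E = e}`. -/
def obsY {Ω : Type*} (T : ℕ) (E : Ω → ℕ) (Ye : ℕ → ℕ → Ω → ℝ) (Yinf : ℕ → Ω → ℝ)
    (t : ℕ) (ω : Ω) : ℝ :=
  Yinf t ω + ∑ e ∈ Finset.Icc 1 T, (Ye e t ω - Yinf t ω) * (if E ω = e then 1 else 0)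

/-- Cohort-specific average treatment effect on the treated,
`CATT(e,l) := E[Yᵉ_{e+l} − Y∞_{e+l} | E = e]`. -/
def CATT {Ω : Type*} [MeasurableSpace Ω] (μ : Measure Ω) (E : Ω → ℕ)
    (Ye : ℕ → ℕ → Ω → ℝ) (Yinf : ℕ → Ω → ℝ) (e : ℕ) (l : ℤ) : ℝ :=
  cexp μ (fun ω => Ye e ((e : ℤ) + l).toNat ω - Yinf ((e : ℤ) + l).toNat ω) {ω | E ω = e}

/-- Parallel trends in baseline outcome. -/
def PT {Ω : Type*} [MeasurableSpace Ω] (μ : Measure Ω) (T : ℕ) (E : Ω → ℕ)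
    (Yinf : ℕ → Ω → ℝ) : Prop :=
  ∀ e ∈ Finset.Icc 1 T, ∀ s ≤ T, ∀ t ≤ T,
    cexp μ (fun ω => Yinf t ω - Yinf s ω) {ω | E ω = e}
      = ∫ ω, (Yinf t ω - Yinf s ω) ∂μ

/-- No anticipatory behavior. -/
def NA {Ω : Type*} [MeasurableSpace Ω] (μ : Measure Ω) (T : ℕ)
    (Ye : ℕ → ℕ → Ω → ℝ) (Yinf : ℕ → Ω → ℝ) : Prop :=
  ∀ e ∈ Finset.Icc 1 T, ∀ t < e, Ye e t =ᵐ[μ] Yinf t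

/-!
Under no anticipation, the observed change `Y_{e+l} − Y_s` equals `Yᵉ_{e+l} − Y∞_s` on the cohort
`E = e` and the purely baseline change `Y∞_{e+l} − Y∞_s` on every cohort in `C`, which are all still
untreated at time `e + l`. Splitting the first as the treatment effect plus a baseline change, the
conditional means of the baseline change on both groups equal its unconditional mean by parallel
trends (for `E ∈ C`, cohort by cohort), so they cancel in the contrast and leave `CATT(e,l)`.
-/

open Function

section ConditionalMean

variable {Ω : Type*} [MeasurableSpace Ω] {μ : Measure Ω} {f g : Ω → ℝ} {A : Set Ω} {m : ℝ}

theorem cexp_add (hf : IntegrableOn f A μ) (hg : IntegrableOn g A μ) :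
    cexp μ (fun ω => f ω + g ω) A = cexp μ f A + cexp μ g A := by
  rw [cexp, cexp, cexp, integral_add hf hg, add_div]

theorem cexp_congr_ae (hA : MeasurableSet A) (h : ∀ᵐ ω ∂μ, ω ∈ A → f ω = g ω) :
    cexp μ f A = cexp μ g A := by
  rw [cexp, cexp, setIntegral_congr_ae hA h]

theorem setIntegral_eq_mul_of_cexp_eq [IsFiniteMeasure μ] (h : cexp μ f A = m) :
    ∫ ω in A, f ω ∂μ = m * (μ A).toReal := by
  by_cases hA : μ A = 0
  · simp [Measure.restrict_eq_zero.mpr hA, hA]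
  · rw [← h, cexp, div_mul_cancel₀]
    exact ENNReal.toReal_ne_zero.mpr ⟨hA, measure_ne_top μ A⟩

theorem cexp_biUnion_finset_of_cexp_eq [IsFiniteMeasure μ] {ι : Type*} {s : Finset ι}
    {A : ι → Set Ω} (hA : ∀ i ∈ s, MeasurableSet (A i))
    (hd : (s : Set ι).Pairwise (Disjoint on A)) (hf : ∀ i ∈ s, IntegrableOn f (A i) μ)
    (hm : ∀ i ∈ s, cexp μ f (A i) = m) (hpos : μ (⋃ i ∈ s, A i) ≠ 0) :
    cexp μ f (⋃ i ∈ s, A i) = m := by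
  have hμ : (μ (⋃ i ∈ s, A i)).toReal = ∑ i ∈ s, (μ (A i)).toReal := by
    rw [measure_biUnion_finset hd hA, ENNReal.toReal_sum fun i _ => measure_ne_top μ (A i)]
  rw [cexp, integral_biUnion_finset s hA hd hf,
    Finset.sum_congr rfl fun i hi => setIntegral_eq_mul_of_cexp_eq (hm i hi),
    ← Finset.mul_sum, ← hμ, mul_div_cancel_right₀]
  exact ENNReal.toReal_ne_zero.mpr ⟨hpos, measure_ne_top μ _⟩

end ConditionalMean

theorem obsY_of_mem_Icc {Ω : Type*} {T : ℕ} {E : Ω → ℕ} {Ye : ℕ → ℕ → Ω → ℝ}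
    {Yinf : ℕ → Ω → ℝ} {ω : Ω} (t : ℕ) (h : E ω ∈ Finset.Icc 1 T) :
    obsY T E Ye Yinf t ω = Ye (E ω) t ω := by
  rw [obsY, Finset.sum_eq_single_of_mem (E ω) h fun c _ hc => by simp [Ne.symm hc]]
  simp

section DiD

variable {Ω : Type*} [MeasurableSpace Ω] {μ : Measure Ω} {T : ℕ} {E : Ω → ℕ}
  {Ye : ℕ → ℕ → Ω → ℝ} {Yinf : ℕ → Ω → ℝ} {s t : ℕ}

theorem NA.ae_obsY_eq_Yinf (hNA : NA μ T Ye Yinf) (t : ℕ) :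
    ∀ᵐ ω ∂μ, E ω ∈ Finset.Icc 1 T → t < E ω → obsY T E Ye Yinf t ω = Yinf t ω := by
  have hcohorts : ∀ᵐ ω ∂μ, ∀ c ∈ Finset.Icc 1 T, t < c → Ye c t ω = Yinf t ω :=
    (eventually_all_finset _).mpr fun c hc =>
      eventually_imp_distrib_left.mpr fun htc => hNA c hc t htc
  filter_upwards [hcohorts] with ω hω hE htE
  rw [obsY_of_mem_Icc t hE, hω _ hE htE]

theorem NA.cexp_obsY_sub_of_eq (hNA : NA μ T Ye Yinf) (hE : Measurable E) {e : ℕ}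
    (he : e ∈ Finset.Icc 1 T) (hs : s < e)
    (hτ : Integrable (fun ω => Ye e t ω - Yinf t ω) μ)
    (hΔ : Integrable (fun ω => Yinf t ω - Yinf s ω) μ) :
    cexp μ (fun ω => obsY T E Ye Yinf t ω - obsY T E Ye Yinf s ω) {ω | E ω = e}
      = cexp μ (fun ω => Ye e t ω - Yinf t ω) {ω | E ω = e}
        + cexp μ (fun ω => Yinf t ω - Yinf s ω) {ω | E ω = e} := by
  rw [← cexp_add hτ.integrableOn hΔ.integrableOn]
  refine cexp_congr_ae (hE (measurableSet_singleton e)) ?_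
  filter_upwards [hNA e he s hs] with ω hω (hωe : E ω = e)
  rw [obsY_of_mem_Icc t (hωe ▸ he), obsY_of_mem_Icc s (hωe ▸ he), hωe, hω]
  ring

theorem NA.cexp_obsY_sub_of_mem (hNA : NA μ T Ye Yinf) (hE : Measurable E) {C : Set ℕ}
    (hC : ∀ c ∈ C, c ∈ Finset.Icc 1 T ∧ t < c ∧ s < c) :
    cexp μ (fun ω => obsY T E Ye Yinf t ω - obsY T E Ye Yinf s ω) {ω | E ω ∈ C}
      = cexp μ (fun ω => Yinf t ω - Yinf s ω) {ω | E ω ∈ C} := by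
  refine cexp_congr_ae (hE (Set.to_countable C).measurableSet) ?_
  filter_upwards [hNA.ae_obsY_eq_Yinf t, hNA.ae_obsY_eq_Yinf s] with ω ht hs (hω : E ω ∈ C)
  obtain ⟨hmem, htc, hsc⟩ := hC _ hω
  rw [ht hmem htc, hs hmem hsc]

theorem PT.cexp_mem_eq_integral (hPT : PT μ T E Yinf) (hE : Measurable E) [IsFiniteMeasure μ]
    (hs : s ≤ T) (ht : t ≤ T) (hint : Integrable (fun ω => Yinf t ω - Yinf s ω) μ)
    {C : Set ℕ} (hC : C ⊆ Finset.Icc 1 T) (hpos : ∃ c ∈ C, 0 < μ {ω | E ω = c}) :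
    cexp μ (fun ω => Yinf t ω - Yinf s ω) {ω | E ω ∈ C}
      = ∫ ω, (Yinf t ω - Yinf s ω) ∂μ := by
  classical
  set F := (Finset.Icc 1 T).filter (· ∈ C)
  have hCF : {ω | E ω ∈ C} = ⋃ c ∈ F, {ω | E ω = c} := by
    ext ω
    simp only [F, Set.mem_ofPred_eq, Set.mem_iUnion, Finset.mem_filter, exists_prop,
      exists_eq_right']
    exact ⟨fun h => ⟨hC h, h⟩, And.right⟩
  obtain ⟨c, hcC, hc⟩ := hpos
  have hCpos : μ {ω | E ω ∈ C} ≠ 0 :=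
    (hc.trans_le (measure_mono fun ω (hω : E ω = c) => show E ω ∈ C from hω ▸ hcC)).ne'
  rw [hCF] at hCpos ⊢
  exact cexp_biUnion_finset_of_cexp_eq (fun c _ => hE (measurableSet_singleton c))
    (fun a _ b _ hab => Set.disjoint_left.mpr fun ω ha hb => hab (ha.symm.trans hb))
    (fun c _ => hint.integrableOn) (fun c hc => hPT c (Finset.mem_filter.mp hc).1 s hs t ht)
    hCpos

end DiD

theorem did_identifies_catt_general
    {Ω : Type*} [MeasurableSpace Ω] (μ : Measure Ω) [IsProbabilityMeasure μ]
    (T : ℕ)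
    (E : Ω → ℕ) (hE : Measurable E)
    (hpos : ∀ e ∈ Finset.Icc 1 T, 0 < μ {ω | E ω = e})
    (Ye : ℕ → ℕ → Ω → ℝ) (Yinf : ℕ → Ω → ℝ)
    (hL2e : ∀ e ∈ Finset.Icc 1 T, ∀ t ≤ T, MemLp (Ye e t) 2 μ)
    (hL2inf : ∀ t ≤ T, MemLp (Yinf t) 2 μ)
    (hPT : PT μ T E Yinf) (hNA : NA μ T Ye Yinf)
    (e : ℕ) (he : e ∈ Finset.Icc 1 T)
    (l : ℤ) (hl1 : -(e : ℤ) ≤ l) (hl2 : l ≤ (T : ℤ) - e - 1)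
    (s : ℕ) (hs : s < e)
    (C : Set ℕ) (hCne : C.Nonempty)
    (hCsub : C ⊆ {c | (e : ℤ) + l < (c : ℤ) ∧ c ≤ T ∧ s < c}) :
    cexp μ (fun ω => obsY T E Ye Yinf ((e : ℤ) + l).toNat ω - obsY T E Ye Yinf s ω)
        {ω | E ω = e}
      - cexp μ (fun ω => obsY T E Ye Yinf ((e : ℤ) + l).toNat ω - obsY T E Ye Yinf s ω)
        {ω | E ω ∈ C}
      = CATT μ E Ye Yinf e l := by
  obtain ⟨he1, heT⟩ := Finset.mem_Icc.mp he
  set t := ((e : ℤ) + l).toNat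
  have htT : t ≤ T := by omega
  have hsT : s ≤ T := by omega
  have hC : ∀ c ∈ C, c ∈ Finset.Icc 1 T ∧ t < c ∧ s < c := fun c hc => by
    obtain ⟨hlt, hcT, hsc⟩ := hCsub hc
    exact ⟨Finset.mem_Icc.mpr ⟨by omega, hcT⟩, by omega, hsc⟩
  obtain ⟨c, hc⟩ := hCne
  have hΔ : Integrable (fun ω => Yinf t ω - Yinf s ω) μ :=
    ((hL2inf t htT).integrable one_le_two).sub ((hL2inf s hsT).integrable one_le_two)
  have hτ : Integrable (fun ω => Ye e t ω - Yinf t ω) μ :=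
    ((hL2e e he t htT).integrable one_le_two).sub ((hL2inf t htT).integrable one_le_two)
  rw [hNA.cexp_obsY_sub_of_eq hE he hs hτ hΔ, hNA.cexp_obsY_sub_of_mem hE hC,
    hPT e he s hsT t htT, hPT.cexp_mem_eq_integral hE hsT htT hΔ (fun c hc => (hC c hc).1)
      ⟨c, hc, hpos c (hC c hc).1⟩, add_sub_cancel_right, CATT]

/-- Proposition 3 (identification): the population difference-in-differences contrast
identifies `CATT(e,l)`. -/
theorem did_identifies_catt
    {Ω : Type*} [MeasurableSpace Ω] (μ : Measure Ω) [IsProbabilityMeasure μ]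
    (T : ℕ) (hT : 1 ≤ T)
    (E : Ω → ℕ) (hE : Measurable E)
    (hsupp : μ {ω | 1 ≤ E ω ∧ E ω ≤ T} = 1)
    (hpos : ∀ e ∈ Finset.Icc 1 T, 0 < μ {ω | E ω = e})
    (Ye : ℕ → ℕ → Ω → ℝ) (Yinf : ℕ → Ω → ℝ)
    (hL2e : ∀ e ∈ Finset.Icc 1 T, ∀ t ≤ T, MemLp (Ye e t) 2 μ)
    (hL2inf : ∀ t ≤ T, MemLp (Yinf t) 2 μ)
    (hPT : PT μ T E Yinf) (hNA : NA μ T Ye Yinf)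
    (e : ℕ) (he : e ∈ Finset.Icc 1 T)
    (l : ℤ) (hl1 : -(e : ℤ) ≤ l) (hl2 : l ≤ (T : ℤ) - e - 1)
    (s : ℕ) (hs : s < e)
    (C : Set ℕ) (hCne : C.Nonempty)
    (hCsub : C ⊆ {c | (e : ℤ) + l < (c : ℤ) ∧ c ≤ T ∧ s < c}) :
    cexp μ (fun ω => obsY T E Ye Yinf ((e : ℤ) + l).toNat ω - obsY T E Ye Yinf s ω)
        {ω | E ω = e}
      - cexp μ (fun ω => obsY T E Ye Yinf ((e : ℤ) + l).toNat ω - obsY T E Ye Yinf s ω)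
        {ω | E ω ∈ C}
      = CATT μ E Ye Yinf e l :=
  did_identifies_catt_general μ T E hE hpos Ye Yinf hL2e hL2inf hPT hNA e he l hl1 hl2 s hs C hCne
    hCsub

end
end

section
/- The denominator of the static fixed-effects estimand decomposes over cohorts and lags: V = Σ_{e=1}^{T} Σ_{l=0}^{T−e} w(e,l). Consequently, if V ≠ 0, the normalized weights ω(e,l) := w(e,l)/V satisfy Σ_{e=1}^{T} Σ_{l=0}^{T−e} ω(e,l) = 1. (Weights-sum-to-one claim of Proposition 1; no parallel trends or no anticipation assumption is needed.) -/
open MeasureTheory Filter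

noncomputable section

/-- Two-way demeaning of a panel of random variables. -/
def ddot {Ω : Type*} [MeasurableSpace Ω] (μ : Measure Ω) (T : ℕ) (X : ℕ → Ω → ℝ)
    (t : ℕ) (ω : Ω) : ℝ :=
  X t ω - (∫ ω', X t ω' ∂μ)
    - (1 / ((T : ℝ) + 1)) * ∑ s ∈ Finset.range (T + 1), X s ω
    + (1 / ((T : ℝ) + 1)) * ∑ s ∈ Finset.range (T + 1), ∫ ω', X s ω' ∂μ

/-- Treatment status `D_t := 1{E ≤ t}`. -/
def Dstat {Ω : Type*} (E : Ω → ℕ) (t : ℕ) (ω : Ω) : ℝ :=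
  if E ω ≤ t then 1 else 0

/-- Denominator of the static fixed-effects estimand, `V := Σ_{t=0}^{T} E[D_t·D̈_t]`. -/
def Vstat {Ω : Type*} [MeasurableSpace Ω] (μ : Measure Ω) (T : ℕ) (E : Ω → ℕ) : ℝ :=
  ∑ t ∈ Finset.range (T + 1), ∫ ω, Dstat E t ω * ddot μ T (Dstat E) t ω ∂μ

/-- Unnormalized weight
`w(e,l) := P(E=e)·(1 − P(E ≤ e+l) − (T−e+1)/(T+1) + (1/(T+1))·Σ_{s=0}^{T} P(E ≤ s))`. -/
def wstat {Ω : Type*} [MeasurableSpace Ω] (μ : Measure Ω) (T : ℕ) (E : Ω → ℕ)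
    (e l : ℕ) : ℝ :=
  (μ {ω | E ω = e}).toReal *
    (1 - (μ {ω | E ω ≤ e + l}).toReal - ((T : ℝ) - (e : ℝ) + 1) / ((T : ℝ) + 1)
      + (1 / ((T : ℝ) + 1)) * ∑ s ∈ Finset.range (T + 1), (μ {ω | E ω ≤ s}).toReal)

/-! On the event `{E = e}` the treatment path is `D_s = 1{e ≤ s}`, so `Σ_s D_s = T - e + 1` and
`D_t·D̈_t` is a function of `E` alone: it vanishes for `t < e` and equals the bracket of
`w(e, t - e)` for `t ≥ e`. Integrating against the law of `E` and writing `t = e + l` turns `V`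
into `Σ_e Σ_l w(e,l)`. -/

/-- The value of `D̈_t` on the cohort `{E = e}` at a treated period `e ≤ t ≤ T`. -/
def ddotCohort {Ω : Type*} [MeasurableSpace Ω] (μ : Measure Ω) (T : ℕ) (E : Ω → ℕ)
    (e t : ℕ) : ℝ :=
  1 - (μ {ω | E ω ≤ t}).toReal - ((T : ℝ) - (e : ℝ) + 1) / ((T : ℝ) + 1)
    + (1 / ((T : ℝ) + 1)) * ∑ s ∈ Finset.range (T + 1), (μ {ω | E ω ≤ s}).toReal

theorem integral_comp_eq_sum_of_ae_mem {Ω α : Type*} [MeasurableSpace Ω] [MeasurableSpace α]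
    [Countable α] [MeasurableSingletonClass α] {μ : Measure Ω} [IsFiniteMeasure μ]
    {X : Ω → α} (hX : Measurable X) {s : Finset α} (hs : ∀ᵐ ω ∂μ, X ω ∈ s) (f : α → ℝ) :
    ∫ ω, f (X ω) ∂μ = ∑ a ∈ s, μ.real {ω | X ω = a} * f a := by
  have hmap : ∀ᵐ a ∂μ.map X, a ∈ (s : Set α) :=
    (ae_map_iff hX.aemeasurable s.measurableSet).2 hs
  rw [← integral_map hX.aemeasurable (measurable_of_countable f).aestronglyMeasurable,
    ← Measure.restrict_eq_self_of_ae_mem hmap, setIntegral_finset s IntegrableOn.finset]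
  refine Finset.sum_congr rfl fun a _ => ?_
  rw [smul_eq_mul, measureReal_def, Measure.map_apply hX (measurableSet_singleton a)]
  rfl

section Dstat

variable {Ω : Type*} {E : Ω → ℕ}

theorem Dstat_eq_indicator (t : ℕ) : Dstat E t = {ω | E ω ≤ t}.indicator 1 := by
  ext ω
  simp [Dstat, Set.indicator_apply]

theorem integral_Dstat [MeasurableSpace Ω] (μ : Measure Ω) (hE : Measurable E) (t : ℕ) :
    ∫ ω, Dstat E t ω ∂μ = (μ {ω | E ω ≤ t}).toReal := by
  rw [Dstat_eq_indicator, integral_indicator_one (s := {ω | E ω ≤ t}) (hE measurableSet_Iic),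
    measureReal_def]

theorem sum_range_Dstat {T : ℕ} {ω : Ω} (hω : E ω ≤ T) :
    ∑ s ∈ Finset.range (T + 1), Dstat E s ω = (T : ℝ) - E ω + 1 := by
  have hfilter : {s ∈ Finset.range (T + 1) | E ω ≤ s} = Finset.Ico (E ω) (T + 1) := by
    ext s
    simp only [Finset.mem_filter, Finset.mem_range, Finset.mem_Ico]
    omega
  unfold Dstat
  rw [Finset.sum_boole, hfilter, Nat.card_Ico, Nat.cast_sub (by omega)]
  push_cast
  ring

theorem Dstat_mul_ddot [MeasurableSpace Ω] (μ : Measure Ω) (hE : Measurable E) {T t : ℕ}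
    (ht : t ≤ T) (ω : Ω) :
    Dstat E t ω * ddot μ T (Dstat E) t ω
      = if E ω ≤ t then ddotCohort μ T E (E ω) t else 0 := by
  split_ifs with h
  · simp only [ddot, integral_Dstat μ hE, sum_range_Dstat (h.trans ht), ddotCohort]
    simp only [Dstat, h, ↓reduceIte, one_div, one_mul, add_left_inj, sub_right_inj]
    ring
  · simp [Dstat, h]

end Dstat

section Weights

variable {Ω : Type*} [MeasurableSpace Ω] {μ : Measure Ω} {T : ℕ} {E : Ω → ℕ}

theorem wstat_eq_mul_ddotCohort (e l : ℕ) :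
    wstat μ T E e l = (μ {ω | E ω = e}).toReal * ddotCohort μ T E e (e + l) := rfl

theorem integral_Dstat_mul_ddot [IsFiniteMeasure μ] (hE : Measurable E)
    (hsupp : ∀ᵐ ω ∂μ, E ω ∈ Finset.Icc 1 T) {t : ℕ} (ht : t ≤ T) :
    ∫ ω, Dstat E t ω * ddot μ T (Dstat E) t ω ∂μ
      = ∑ e ∈ Finset.Icc 1 t, (μ {ω | E ω = e}).toReal * ddotCohort μ T E e t := by
  have hcohorts : {e ∈ Finset.Icc 1 T | e ≤ t} = Finset.Icc 1 t := by
    ext e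
    simp only [Finset.mem_filter, Finset.mem_Icc]
    omega
  simp only [Dstat_mul_ddot μ hE ht]
  rw [integral_comp_eq_sum_of_ae_mem hE hsupp fun e => if e ≤ t then ddotCohort μ T E e t else 0]
  simp only [measureReal_def, mul_ite, mul_zero]
  rw [← Finset.sum_filter, hcohorts]

theorem Vstat_eq_sum_wstat [IsFiniteMeasure μ] (hE : Measurable E)
    (hsupp : ∀ᵐ ω ∂μ, E ω ∈ Finset.Icc 1 T) :
    Vstat μ T E = ∑ e ∈ Finset.Icc 1 T, ∑ l ∈ Finset.range (T - e + 1), wstat μ T E e l := by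
  have hswap : ∀ t e, t ∈ Finset.range (T + 1) ∧ e ∈ Finset.Icc 1 t ↔
      t ∈ Finset.Icc e T ∧ e ∈ Finset.Icc 1 T := by
    intro t e
    simp only [Finset.mem_range, Finset.mem_Icc]
    omega
  have hlags : ∀ e ∈ Finset.Icc 1 T, Finset.Icc e T = Finset.Ico e (e + (T - e + 1)) := by
    intro e he
    rw [Finset.mem_Icc] at he
    ext t
    simp only [Finset.mem_Icc, Finset.mem_Ico]
    omega
  rw [Vstat, Finset.sum_congr rfl fun t ht =>
      integral_Dstat_mul_ddot hE hsupp (Nat.lt_succ_iff.1 (Finset.mem_range.1 ht)),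
    Finset.sum_comm' hswap]
  refine Finset.sum_congr rfl fun e he => ?_
  rw [hlags e he, Finset.sum_Ico_eq_sum_range, Nat.add_sub_cancel_left]
  simp only [wstat_eq_mul_ddotCohort]

end Weights

theorem static_fe_weights_sum_to_one_general
    {Ω : Type*} [MeasurableSpace Ω] (μ : Measure Ω) [IsProbabilityMeasure μ]
    (T : ℕ)
    (E : Ω → ℕ) (hE : Measurable E)
    (hsupp : μ {ω | 1 ≤ E ω ∧ E ω ≤ T} = 1) :
    Vstat μ T E = ∑ e ∈ Finset.Icc 1 T, ∑ l ∈ Finset.range (T - e + 1), wstat μ T E e l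
      ∧ (Vstat μ T E ≠ 0 →
        ∑ e ∈ Finset.Icc 1 T, ∑ l ∈ Finset.range (T - e + 1),
          wstat μ T E e l / Vstat μ T E = 1) := by
  have hsupp_ae : ∀ᵐ ω ∂μ, E ω ∈ Finset.Icc 1 T := by
    simp only [Finset.mem_Icc]
    have hmeas : MeasurableSet {ω | 1 ≤ E ω ∧ E ω ≤ T} :=
      (hE measurableSet_Ici).inter (hE measurableSet_Iic)
    rw [ae_iff_measure_eq hmeas.nullMeasurableSet, measure_univ]
    exact hsupp
  have hV := Vstat_eq_sum_wstat hE hsupp_ae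
  refine ⟨hV, fun hV0 => ?_⟩
  simp only [← Finset.sum_div]
  rw [← hV, div_self hV0]

/-- Proposition 1 (weights sum to one): `V = Σ_{e=1}^{T} Σ_{l=0}^{T−e} w(e,l)`, and hence if
`V ≠ 0` the normalized weights sum to one. -/
theorem static_fe_weights_sum_to_one
    {Ω : Type*} [MeasurableSpace Ω] (μ : Measure Ω) [IsProbabilityMeasure μ]
    (T : ℕ) (hT : 1 ≤ T)
    (E : Ω → ℕ) (hE : Measurable E)
    (hsupp : μ {ω | 1 ≤ E ω ∧ E ω ≤ T} = 1)
    (hpos : ∀ e ∈ Finset.Icc 1 T, 0 < μ {ω | E ω = e}) :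
    Vstat μ T E = ∑ e ∈ Finset.Icc 1 T, ∑ l ∈ Finset.range (T - e + 1), wstat μ T E e l
      ∧ (Vstat μ T E ≠ 0 →
        ∑ e ∈ Finset.Icc 1 T, ∑ l ∈ Finset.range (T - e + 1),
          wstat μ T E e l / Vstat μ T E = 1) :=
  static_fe_weights_sum_to_one_general μ T E hE hsupp

end
end

section
/- For every e ∈ {1,…,T}, the unnormalized weight attached to the last-period cohort effect satisfies w(e, T−e) = P(E = e)·(e − E[E])/(T+1). In particular, if e < E[E] then w(e, T−e) < 0; hence if in addition V > 0, the normalized weight ω(e, T−e) := w(e, T−e)/V on CATT(e, T−e) in the static fixed-effects estimand is strictly negative. (Negative-weights corollary of Proposition 1: because all units are treated by period T, early cohorts' long-run effects receive negative weight.) -/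
/-!
Since `E ≤ T` almost surely, `E = ∑_{s=0}^{T} 1{s < E}`, so the layer-cake identity
`∑_{s=0}^{T} P(E ≤ s) = T + 1 − E[E]` holds. Together with `P(E ≤ T) = 1` it collapses
`w(e, T − e)` to `P(E = e)·(e − E[E])/(T + 1)`, whose sign is that of `e − E[E]`.
-/

open MeasureTheory Filter

noncomputable section

section TailSum

open Finset

variable {Ω : Type*} [MeasurableSpace Ω] {μ : Measure Ω} {E : Ω → ℕ} {N : ℕ}

theorem Nat.cast_eq_sum_range_ite_lt {n : ℕ} (h : n ≤ N) :
    (n : ℝ) = ∑ s ∈ range N, if s < n then (1 : ℝ) else 0 := by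
  rw [sum_boole, show {s ∈ range N | s < n} = range n by ext; simp; omega, card_range]

theorem integral_natCast_eq_sum_measureReal_lt [IsFiniteMeasure μ] (hE : Measurable E)
    (hN : ∀ᵐ ω ∂μ, E ω ≤ N) :
    ∫ ω, (E ω : ℝ) ∂μ = ∑ s ∈ range N, μ.real {ω | s < E ω} := by
  have hset (s : ℕ) : MeasurableSet {ω | s < E ω} := hE measurableSet_Ioi
  have hsum : (fun ω => (E ω : ℝ)) =ᵐ[μ]
      fun ω => ∑ s ∈ range N, {ω | s < E ω}.indicator (1 : Ω → ℝ) ω := by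
    filter_upwards [hN] with ω hω
    simp only [Set.indicator_apply, Set.mem_ofPred_eq, Pi.one_apply]
    exact Nat.cast_eq_sum_range_ite_lt hω
  rw [integral_congr_ae hsum,
    integral_finsetSum _ fun s _ => (integrable_const 1).indicator (hset s)]
  exact sum_congr rfl fun s _ => integral_indicator_one (hset s)

theorem sum_range_measureReal_le_eq_sub_integral [IsProbabilityMeasure μ] (hE : Measurable E)
    (hN : ∀ᵐ ω ∂μ, E ω ≤ N) :
    ∑ s ∈ range (N + 1), μ.real {ω | E ω ≤ s} = N + 1 - ∫ ω, (E ω : ℝ) ∂μ := by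
  have hcompl (s : ℕ) : μ.real {ω | E ω ≤ s} = 1 - μ.real {ω | s < E ω} := by
    rw [← probReal_compl_eq_one_sub (s := {ω | s < E ω}) (hE measurableSet_Ioi)]
    congr 1; ext; simp
  rw [integral_natCast_eq_sum_measureReal_lt hE (hN.mono fun _ h => h.trans N.le_succ)]
  simp [hcompl, sum_sub_distrib]

end TailSum

theorem wstat_last_period {Ω : Type*} [MeasurableSpace Ω] {μ : Measure Ω}
    [IsProbabilityMeasure μ] {T : ℕ} {E : Ω → ℕ} (hE : Measurable E) (hT : ∀ᵐ ω ∂μ, E ω ≤ T)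
    {e : ℕ} (he : e ≤ T) :
    wstat μ T E e (T - e) = μ.real {ω | E ω = e} * (e - ∫ ω, (E ω : ℝ) ∂μ) / (T + 1) := by
  have hlast : μ {ω | E ω ≤ T} = 1 := (mem_ae_iff_prob_eq_one (hE measurableSet_Iic)).1 hT
  simp only [wstat, Nat.add_sub_cancel' he, hlast, ENNReal.toReal_one, ← measureReal_def,
    sum_range_measureReal_le_eq_sub_integral hE hT]
  field_simp
  ring

theorem static_fe_last_period_weight_negative_general
    {Ω : Type*} [MeasurableSpace Ω] (μ : Measure Ω) [IsProbabilityMeasure μ]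
    (T : ℕ)
    (E : Ω → ℕ) (hE : Measurable E)
    (hsupp : μ {ω | 1 ≤ E ω ∧ E ω ≤ T} = 1)
    (hpos : ∀ e ∈ Finset.Icc 1 T, 0 < μ {ω | E ω = e}) :
    ∀ e ∈ Finset.Icc 1 T,
      wstat μ T E e (T - e)
          = (μ {ω | E ω = e}).toReal * ((e : ℝ) - ∫ ω, (E ω : ℝ) ∂μ) / ((T : ℝ) + 1)
        ∧ ((e : ℝ) < ∫ ω, (E ω : ℝ) ∂μ → wstat μ T E e (T - e) < 0)
        ∧ ((e : ℝ) < ∫ ω, (E ω : ℝ) ∂μ → 0 < Vstat μ T E →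
            wstat μ T E e (T - e) / Vstat μ T E < 0) := by
  intro e he
  have hsupp_ae : ∀ᵐ ω ∂μ, 1 ≤ E ω ∧ E ω ≤ T :=
    (mem_ae_iff_prob_eq_one ((hE measurableSet_Ici).inter (hE measurableSet_Iic))).2 hsupp
  have hT : ∀ᵐ ω ∂μ, E ω ≤ T := hsupp_ae.mono fun _ h => h.2
  have hw := wstat_last_period hE hT (Finset.mem_Icc.1 he).2
  have hcohort : 0 < μ.real {ω | E ω = e} :=
    ENNReal.toReal_pos (hpos e he).ne' (measure_ne_top μ _)
  have hneg (hlt : (e : ℝ) < ∫ ω, (E ω : ℝ) ∂μ) : wstat μ T E e (T - e) < 0 := by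
    rw [hw]
    exact div_neg_of_neg_of_pos (mul_neg_of_pos_of_neg hcohort (sub_neg.2 hlt)) (by positivity)
  exact ⟨hw, hneg, fun hlt hV => div_neg_of_neg_of_pos (hneg hlt) hV⟩

/-- Negative-weights corollary of Proposition 1: for every cohort `e`,
`w(e, T−e) = P(E=e)·(e − E[E])/(T+1)`; in particular the weight is strictly negative for
early cohorts (`e < E[E]`), and so is the normalized weight when `V > 0`. -/
theorem static_fe_last_period_weight_negative
    {Ω : Type*} [MeasurableSpace Ω] (μ : Measure Ω) [IsProbabilityMeasure μ]
    (T : ℕ) (hT : 1 ≤ T)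
    (E : Ω → ℕ) (hE : Measurable E)
    (hsupp : μ {ω | 1 ≤ E ω ∧ E ω ≤ T} = 1)
    (hpos : ∀ e ∈ Finset.Icc 1 T, 0 < μ {ω | E ω = e}) :
    ∀ e ∈ Finset.Icc 1 T,
      wstat μ T E e (T - e)
          = (μ {ω | E ω = e}).toReal * ((e : ℝ) - ∫ ω, (E ω : ℝ) ∂μ) / ((T : ℝ) + 1)
        ∧ ((e : ℝ) < ∫ ω, (E ω : ℝ) ∂μ → wstat μ T E e (T - e) < 0)
        ∧ ((e : ℝ) < ∫ ω, (E ω : ℝ) ∂μ → 0 < Vstat μ T E →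
            wstat μ T E e (T - e) / Vstat μ T E < 0) :=
  static_fe_last_period_weight_negative_general μ T E hE hsupp hpos

end
end

section
/- Assume parallel trends (PT) and no anticipation (NA), assume V ≠ 0, and assume treatment effects are static and stationary, i.e. there is a constant c ∈ ℝ with CATT(e,l) = c for every e ∈ {1,…,T} and every 0 ≤ l ≤ T−e. Then the static fixed-effects estimand γ := (Σ_{t=0}^{T} E[Y_t·D̈_t]) / V equals c. (Special case of Proposition 1: under static and stationary treatment effects the static FE estimator recovers the constant treatment effect.) -/
open MeasureTheory Filter

noncomputable section

/-!
On the fibre `{E = e}` the demeaned treatment `D̈_t` is a constant `G_t(e)`, which sums to zero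
over `t` (time demeaning) and, weighted by `P(E = e)`, over `e` (cross-sectional demeaning).
Under PT, NA and a constant CATT, the cohort-`e` contribution `E[Y_t 1{E = e}]` is a cohort
effect plus `P(E = e)` times a time effect plus `c P(E = e) 1{e ≤ t}`. Both effects are
annihilated by `G`, and what remains is `c · V`.
-/

section Fibers

variable {Ω α : Type*} [MeasurableSpace Ω] [MeasurableSpace α] [MeasurableSingletonClass α]
  {μ : Measure Ω} {E : Ω → α} {s : Finset α}

theorem measurableSet_fiber (hE : Measurable E) (e : α) : MeasurableSet {ω | E ω = e} :=
  hE (measurableSet_singleton e)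

theorem integral_eq_sum_setIntegral_fiber {F : Type*} [NormedAddCommGroup F] [NormedSpace ℝ F]
    (hE : Measurable E) (hs : ∀ᵐ ω ∂μ, E ω ∈ s) {f : Ω → F}
    (hf : ∀ e ∈ s, IntegrableOn f {ω | E ω = e} μ) :
    ∫ ω, f ω ∂μ = ∑ e ∈ s, ∫ ω in {ω | E ω = e}, f ω ∂μ := by
  have hcover : μ.restrict (⋃ e ∈ s, {ω | E ω = e}) = μ :=
    Measure.restrict_eq_self_of_ae_mem (hs.mono fun ω hω => Set.mem_biUnion hω rfl)
  rw [← integral_biUnion_finset (s := fun e => {ω | E ω = e}) s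
    (fun e _ => measurableSet_fiber hE e)
    ((Set.pairwiseDisjoint_fiber E _).subset (Set.subset_univ _)) hf, hcover]

theorem integral_mul_comp_eq_sum (hE : Measurable E) (hs : ∀ᵐ ω ∂μ, E ω ∈ s)
    {h : Ω → ℝ} (hh : ∀ e ∈ s, IntegrableOn h {ω | E ω = e} μ) (G : α → ℝ) :
    ∫ ω, h ω * G (E ω) ∂μ = ∑ e ∈ s, (∫ ω in {ω | E ω = e}, h ω ∂μ) * G e := by
  have hfiber : ∀ e,
      Set.EqOn (fun ω => h ω * G e) (fun ω => h ω * G (E ω)) {ω | E ω = e} :=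
    fun e ω (hω : E ω = e) => by simp only [hω]
  rw [integral_eq_sum_setIntegral_fiber hE hs fun e he =>
    IntegrableOn.congr_fun ((hh e he).mul_const (G e)) (hfiber e) (measurableSet_fiber hE e)]
  refine Finset.sum_congr rfl fun e _ => ?_
  rw [← integral_mul_const, setIntegral_congr_fun (measurableSet_fiber hE e) (hfiber e)]

end Fibers

theorem cexp_mul_measureReal {Ω : Type*} [MeasurableSpace Ω] {μ : Measure Ω} {A : Set Ω}
    (hA : μ A ≠ ⊤) (Z : Ω → ℝ) : cexp μ Z A * μ.real A = ∫ ω in A, Z ω ∂μ := by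
  by_cases h0 : μ A = 0
  · rw [setIntegral_measure_zero _ h0, measureReal_def, h0, ENNReal.toReal_zero, mul_zero]
  · exact div_mul_cancel₀ _ ((measureReal_eq_zero_iff hA).not.mpr h0)

theorem integral_ddot_eq_zero {Ω : Type*} [MeasurableSpace Ω] {μ : Measure Ω}
    [IsProbabilityMeasure μ] (T : ℕ) {X : ℕ → Ω → ℝ} (hX : ∀ s, Integrable (X s) μ)
    (t : ℕ) :
    ∫ ω, ddot μ T X t ω ∂μ = 0 := by
  have hcentred : Integrable (fun ω => X t ω - ∫ ω', X t ω' ∂μ) μ :=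
    (hX t).sub (integrable_const _)
  have hmean :
      Integrable (fun ω => (1 / ((T : ℝ) + 1)) * ∑ s ∈ Finset.range (T + 1), X s ω) μ :=
    (integrable_finsetSum _ fun s _ => hX s).const_mul _
  have hsub : Integrable (fun ω => X t ω - (∫ ω', X t ω' ∂μ)
      - (1 / ((T : ℝ) + 1)) * ∑ s ∈ Finset.range (T + 1), X s ω) μ := hcentred.sub hmean
  unfold ddot
  rw [integral_add hsub (integrable_const _), integral_sub hcentred hmean,
    integral_sub (hX t) (integrable_const _), integral_const_mul,
    integral_finsetSum _ fun s _ => hX s]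
  simp

theorem sum_sum_add_mul_eq_of_orthogonal {ι κ : Type*} {s : Finset ι} {S : Finset κ}
    {G : ι → κ → ℝ} {p : κ → ℝ} (htime : ∀ e ∈ S, ∑ t ∈ s, G t e = 0)
    (hunit : ∀ t ∈ s, ∑ e ∈ S, p e * G t e = 0) (a : κ → ℝ) (b : ι → ℝ) (c : ℝ)
    (w : ι → κ → ℝ) :
    ∑ t ∈ s, ∑ e ∈ S, (a e + b t * p e + c * w t e) * G t e
      = c * ∑ t ∈ s, ∑ e ∈ S, w t e * G t e := by
  have hunitFE : ∑ t ∈ s, ∑ e ∈ S, a e * G t e = 0 := by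
    rw [Finset.sum_comm]
    exact Finset.sum_eq_zero fun e he => by rw [← Finset.mul_sum, htime e he, mul_zero]
  have htimeFE : ∑ t ∈ s, ∑ e ∈ S, b t * (p e * G t e) = 0 :=
    Finset.sum_eq_zero fun t ht => by rw [← Finset.mul_sum, hunit t ht, mul_zero]
  simp only [add_mul, Finset.sum_add_distrib, hunitFE, htimeFE, Finset.mul_sum, mul_assoc,
    zero_add]

section Cohorts

variable {Ω : Type*} [MeasurableSpace Ω] {μ : Measure Ω} {T : ℕ} {E : Ω → ℕ}

def cohortDdot (μ : Measure Ω) (T : ℕ) (E : Ω → ℕ) (t n : ℕ) : ℝ :=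
  (if n ≤ t then 1 else 0) - (∫ ω, Dstat E t ω ∂μ)
    - (1 / ((T : ℝ) + 1)) * ∑ s ∈ Finset.range (T + 1), (if n ≤ s then (1 : ℝ) else 0)
    + (1 / ((T : ℝ) + 1)) * ∑ s ∈ Finset.range (T + 1), ∫ ω, Dstat E s ω ∂μ

theorem ddot_Dstat_eq_cohortDdot (t : ℕ) (ω : Ω) :
    ddot μ T (Dstat E) t ω = cohortDdot μ T E t (E ω) := rfl

theorem sum_cohortDdot_eq_zero (n : ℕ) :
    ∑ t ∈ Finset.range (T + 1), cohortDdot μ T E t n = 0 := by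
  simp only [cohortDdot, Finset.sum_add_distrib, Finset.sum_sub_distrib, Finset.sum_const,
    Finset.card_range, nsmul_eq_mul]
  push_cast
  field_simp
  ring

theorem integrable_Dstat [IsFiniteMeasure μ] (hE : Measurable E) (t : ℕ) :
    Integrable (Dstat E t) μ :=
  Integrable.of_bound
    ((Measurable.ite (hE measurableSet_Iic) measurable_const measurable_const).aestronglyMeasurable)
    1 (ae_of_all _ fun ω => by unfold Dstat; split_ifs <;> simp)

theorem setIntegral_Dstat_fiber (hE : Measurable E) (t e : ℕ) :
    ∫ ω in {ω | E ω = e}, Dstat E t ω ∂μ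
      = μ.real {ω | E ω = e} * if e ≤ t then 1 else 0 := by
  rw [setIntegral_congr_fun (measurableSet_fiber hE e) (g := fun _ => if e ≤ t then 1 else 0)
    fun ω (hω : E ω = e) => by rw [Dstat, hω], setIntegral_const, smul_eq_mul]

theorem integral_mul_ddot_Dstat_eq_sum (hE : Measurable E)
    (hsupp : ∀ᵐ ω ∂μ, E ω ∈ Finset.Icc 1 T) {h : Ω → ℝ}
    (hh : ∀ e ∈ Finset.Icc 1 T, IntegrableOn h {ω | E ω = e} μ) (t : ℕ) :
    ∫ ω, h ω * ddot μ T (Dstat E) t ω ∂μ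
      = ∑ e ∈ Finset.Icc 1 T, (∫ ω in {ω | E ω = e}, h ω ∂μ) * cohortDdot μ T E t e := by
  simp only [ddot_Dstat_eq_cohortDdot]
  exact integral_mul_comp_eq_sum hE hsupp hh (cohortDdot μ T E t)

theorem sum_measureReal_mul_cohortDdot_eq_zero [IsProbabilityMeasure μ] (hE : Measurable E)
    (hsupp : ∀ᵐ ω ∂μ, E ω ∈ Finset.Icc 1 T) (t : ℕ) :
    ∑ e ∈ Finset.Icc 1 T, μ.real {ω | E ω = e} * cohortDdot μ T E t e = 0 := by
  have h := integral_ddot_eq_zero T (integrable_Dstat (μ := μ) hE) t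
  have hsplit := integral_mul_comp_eq_sum hE hsupp (h := fun _ => 1)
    (fun e _ => integrableOn_const) (cohortDdot μ T E t)
  simp only [one_mul, setIntegral_const, smul_eq_mul, mul_one] at hsplit
  rw [← hsplit, ← h]
  rfl

theorem Vstat_eq_sum [IsFiniteMeasure μ] (hE : Measurable E)
    (hsupp : ∀ᵐ ω ∂μ, E ω ∈ Finset.Icc 1 T) :
    Vstat μ T E = ∑ t ∈ Finset.range (T + 1), ∑ e ∈ Finset.Icc 1 T,
      (μ.real {ω | E ω = e} * if e ≤ t then 1 else 0) * cohortDdot μ T E t e := by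
  refine Finset.sum_congr rfl fun t _ => ?_
  rw [integral_mul_ddot_Dstat_eq_sum hE hsupp fun e _ => (integrable_Dstat hE t).integrableOn]
  simp only [setIntegral_Dstat_fiber hE]

end Cohorts

theorem obsY_of_cohort {Ω : Type*} {T : ℕ} {E : Ω → ℕ} {Ye : ℕ → ℕ → Ω → ℝ}
    {Yinf : ℕ → Ω → ℝ} {e : ℕ} (he : e ∈ Finset.Icc 1 T) (t : ℕ) {ω : Ω}
    (hω : E ω = e) :
    obsY T E Ye Yinf t ω = Ye e t ω := by
  rw [obsY, Finset.sum_eq_single_of_mem e he fun e' _ he' => by rw [hω, if_neg he'.symm, mul_zero],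
    hω, if_pos rfl, mul_one, add_sub_cancel]

section Outcomes

variable {Ω : Type*} [MeasurableSpace Ω] {μ : Measure Ω} {T : ℕ} {E : Ω → ℕ}
  {Ye : ℕ → ℕ → Ω → ℝ} {Yinf : ℕ → Ω → ℝ} {e t : ℕ}

theorem setIntegral_Ye_of_const_CATT [IsFiniteMeasure μ] (hNA : NA μ T Ye Yinf) {c : ℝ}
    (hconst : ∀ e ∈ Finset.Icc 1 T, ∀ l : ℕ, l ≤ T - e →
      CATT μ E Ye Yinf e (l : ℤ) = c)
    (he : e ∈ Finset.Icc 1 T) (ht : t ≤ T) (hYe : Integrable (Ye e t) μ)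
    (hYinf : Integrable (Yinf t) μ) :
    ∫ ω in {ω | E ω = e}, Ye e t ω ∂μ
      = ∫ ω in {ω | E ω = e}, Yinf t ω ∂μ
        + c * (μ.real {ω | E ω = e} * if e ≤ t then 1 else 0) := by
  split_ifs with het
  · have hCATT := hconst e he (t - e) (by omega)
    rw [CATT, show ((e : ℤ) + ((t - e : ℕ) : ℤ)).toNat = t by omega] at hCATT
    rw [mul_one, ← hCATT, cexp_mul_measureReal (measure_ne_top μ _),
      integral_sub hYe.integrableOn hYinf.integrableOn, add_sub_cancel]
  · rw [mul_zero, mul_zero, add_zero]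
    exact integral_congr_ae (ae_restrict_of_ae (hNA e he t (by omega)))

theorem setIntegral_Yinf_of_PT [IsFiniteMeasure μ] (hPT : PT μ T E Yinf)
    (he : e ∈ Finset.Icc 1 T) (ht : t ≤ T) (hYt : Integrable (Yinf t) μ)
    (hY0 : Integrable (Yinf 0) μ) :
    ∫ ω in {ω | E ω = e}, Yinf t ω ∂μ
      = ∫ ω in {ω | E ω = e}, Yinf 0 ω ∂μ
        + (∫ ω, (Yinf t ω - Yinf 0 ω) ∂μ) * μ.real {ω | E ω = e} := by
  rw [← hPT e he 0 (Nat.zero_le T) t ht, cexp_mul_measureReal (measure_ne_top μ _),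
    integral_sub hYt.integrableOn hY0.integrableOn, add_sub_cancel]

theorem integrableOn_obsY_fiber (hE : Measurable E) (he : e ∈ Finset.Icc 1 T)
    (hYe : Integrable (Ye e t) μ) : IntegrableOn (obsY T E Ye Yinf t) {ω | E ω = e} μ :=
  hYe.integrableOn.congr_fun (fun _ hω => (obsY_of_cohort he t hω).symm)
    (measurableSet_fiber hE e)

theorem setIntegral_obsY_fiber (hE : Measurable E) (he : e ∈ Finset.Icc 1 T) :
    ∫ ω in {ω | E ω = e}, obsY T E Ye Yinf t ω ∂μ
      = ∫ ω in {ω | E ω = e}, Ye e t ω ∂μ :=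
  setIntegral_congr_fun (measurableSet_fiber hE e) fun _ hω => obsY_of_cohort he t hω

end Outcomes

theorem static_fe_estimand_static_stationary_general
    {Ω : Type*} [MeasurableSpace Ω] (μ : Measure Ω) [IsProbabilityMeasure μ]
    (T : ℕ)
    (E : Ω → ℕ) (hE : Measurable E)
    (hsupp : μ {ω | 1 ≤ E ω ∧ E ω ≤ T} = 1)
    (Ye : ℕ → ℕ → Ω → ℝ) (Yinf : ℕ → Ω → ℝ)
    (hL2e : ∀ e ∈ Finset.Icc 1 T, ∀ t ≤ T, MemLp (Ye e t) 2 μ)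
    (hL2inf : ∀ t ≤ T, MemLp (Yinf t) 2 μ)
    (hPT : PT μ T E Yinf) (hNA : NA μ T Ye Yinf)
    (hV : Vstat μ T E ≠ 0)
    (c : ℝ)
    (hconst : ∀ e ∈ Finset.Icc 1 T, ∀ l : ℕ, l ≤ T - e →
      CATT μ E Ye Yinf e (l : ℤ) = c) :
    (∑ t ∈ Finset.range (T + 1),
        ∫ ω, obsY T E Ye Yinf t ω * ddot μ T (Dstat E) t ω ∂μ) / Vstat μ T E = c := by
  have hcohort : ∀ᵐ ω ∂μ, E ω ∈ Finset.Icc 1 T := by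
    have hmeas : MeasurableSet {ω | 1 ≤ E ω ∧ E ω ≤ T} :=
      hE (measurableSet_Icc : MeasurableSet (Set.Icc 1 T))
    filter_upwards [(ae_iff_measure_eq hmeas.nullMeasurableSet).mpr (by rw [hsupp, measure_univ])]
      with ω hω using Finset.mem_Icc.mpr hω
  have hYe e (he : e ∈ Finset.Icc 1 T) t (ht : t ≤ T) := (hL2e e he t ht).integrable one_le_two
  have hYinf t (ht : t ≤ T) := (hL2inf t ht).integrable one_le_two
  have hnum : ∀ t ∈ Finset.range (T + 1),
      ∫ ω, obsY T E Ye Yinf t ω * ddot μ T (Dstat E) t ω ∂μ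
        = ∑ e ∈ Finset.Icc 1 T, (∫ ω in {ω | E ω = e}, Yinf 0 ω ∂μ
            + (∫ ω, (Yinf t ω - Yinf 0 ω) ∂μ) * μ.real {ω | E ω = e}
            + c * (μ.real {ω | E ω = e} * if e ≤ t then 1 else 0))
          * cohortDdot μ T E t e := by
    intro t ht
    have ht : t ≤ T := Nat.lt_succ_iff.mp (Finset.mem_range.mp ht)
    rw [integral_mul_ddot_Dstat_eq_sum hE hcohort
      (fun e he => integrableOn_obsY_fiber hE he (hYe e he t ht)) t]
    refine Finset.sum_congr rfl fun e he => ?_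
    rw [setIntegral_obsY_fiber hE he,
      setIntegral_Ye_of_const_CATT hNA hconst he ht (hYe e he t ht) (hYinf t ht),
      setIntegral_Yinf_of_PT hPT he ht (hYinf t ht) (hYinf 0 (Nat.zero_le T))]
  rw [Finset.sum_congr rfl hnum, sum_sum_add_mul_eq_of_orthogonal
    (fun e _ => sum_cohortDdot_eq_zero e)
    (fun t _ => sum_measureReal_mul_cohortDdot_eq_zero hE hcohort t), ← Vstat_eq_sum hE hcohort,
    mul_div_assoc, div_self hV, mul_one]

/-- Special case of Proposition 1: under static and stationary treatment effects
(`CATT(e,l) = c` for all cohorts and lags), the static fixed-effects estimand equals `c`. -/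
theorem static_fe_estimand_static_stationary
    {Ω : Type*} [MeasurableSpace Ω] (μ : Measure Ω) [IsProbabilityMeasure μ]
    (T : ℕ) (hT : 1 ≤ T)
    (E : Ω → ℕ) (hE : Measurable E)
    (hsupp : μ {ω | 1 ≤ E ω ∧ E ω ≤ T} = 1)
    (hpos : ∀ e ∈ Finset.Icc 1 T, 0 < μ {ω | E ω = e})
    (Ye : ℕ → ℕ → Ω → ℝ) (Yinf : ℕ → Ω → ℝ)
    (hL2e : ∀ e ∈ Finset.Icc 1 T, ∀ t ≤ T, MemLp (Ye e t) 2 μ)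
    (hL2inf : ∀ t ≤ T, MemLp (Yinf t) 2 μ)
    (hPT : PT μ T E Yinf) (hNA : NA μ T Ye Yinf)
    (hV : Vstat μ T E ≠ 0)
    (c : ℝ)
    (hconst : ∀ e ∈ Finset.Icc 1 T, ∀ l : ℕ, l ≤ T - e →
      CATT μ E Ye Yinf e (l : ℤ) = c) :
    (∑ t ∈ Finset.range (T + 1),
        ∫ ω, obsY T E Ye Yinf t ω * ddot μ T (Dstat E) t ω ∂μ) / Vstat μ T E = c :=
  static_fe_estimand_static_stationary_general μ T E hE hsupp Ye Yinf hL2e hL2inf hPT hNA hV c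
    hconst

end
end

section
/- Assume V_D is invertible. Then for all l, l' ∈ L, the weights in the dynamic fixed-effects decomposition satisfy Σ_{e=1}^{T} ω(l; e, l') = 1 if l = l' and Σ_{e=1}^{T} ω(l; e, l') = 0 if l ≠ l'. (Weight-sum claims of Proposition 2: summed over cohorts, the own-period weights sum to one and the other-period weights sum to zero; no parallel trends or no anticipation assumption is needed.) -/
open MeasureTheory Filter

noncomputable section

/-- Relative-time indicator `Dˡ_t := 1{t − E = l}`. -/
def Drel {Ω : Type*} (E : Ω → ℕ) (l : ℤ) (t : ℕ) (ω : Ω) : ℝ :=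
  if (t : ℤ) - (E ω : ℤ) = l then 1 else 0

/-- Two-way demeaned relative-time indicator `D̈ˡ_t`. -/
def ddotRel {Ω : Type*} [MeasurableSpace Ω] (μ : Measure Ω) (T : ℕ) (E : Ω → ℕ)
    (l : ℤ) (t : ℕ) (ω : Ω) : ℝ :=
  Drel E l t ω - (∫ ω', Drel E l t ω' ∂μ)
    - (1 / ((T : ℝ) + 1)) * ∑ s ∈ Finset.range (T + 1), Drel E l s ω
    + (1 / ((T : ℝ) + 1)) * ∑ s ∈ Finset.range (T + 1), ∫ ω', Drel E l s ω' ∂μ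

/-- The matrix `V_D := Σ_{t=0}^{T} E[D̈_t·D̈_tᵀ]`, indexed by the lag set `L`. -/
def VD {Ω : Type*} [MeasurableSpace Ω] (μ : Measure Ω) (T : ℕ) (E : Ω → ℕ)
    (L : Finset ℤ) : Matrix {x // x ∈ L} {x // x ∈ L} ℝ :=
  fun l l' => ∑ t ∈ Finset.range (T + 1),
    ∫ ω, ddotRel μ T E l.1 t ω * ddotRel μ T E l'.1 t ω ∂μ

/-- The vector `c(e,l') := Σ_{t=0}^{T} E[D̈_t·1{E = e}·D^{l'}_t] ∈ ℝ^L`. -/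
def cvec {Ω : Type*} [MeasurableSpace Ω] (μ : Measure Ω) (T : ℕ) (E : Ω → ℕ)
    (L : Finset ℤ) (e : ℕ) (l' : ℤ) : {x // x ∈ L} → ℝ :=
  fun l => ∑ t ∈ Finset.range (T + 1),
    ∫ ω, ddotRel μ T E l.1 t ω * ((if E ω = e then (1 : ℝ) else 0) * Drel E l' t ω) ∂μ

/-- The numerator vector `Σ_{t=0}^{T} E[D̈_t·Y_t] ∈ ℝ^L`. -/
def bvec {Ω : Type*} [MeasurableSpace Ω] (μ : Measure Ω) (T : ℕ) (E : Ω → ℕ)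
    (Ye : ℕ → ℕ → Ω → ℝ) (Yinf : ℕ → Ω → ℝ) (L : Finset ℤ) : {x // x ∈ L} → ℝ :=
  fun l => ∑ t ∈ Finset.range (T + 1),
    ∫ ω, ddotRel μ T E l.1 t ω * obsY T E Ye Yinf t ω ∂μ

/-- The dynamic fixed-effects estimand vector `μ := V_D⁻¹·Σ_t E[D̈_t·Y_t] ∈ ℝ^L`. -/
def muFE {Ω : Type*} [MeasurableSpace Ω] (μ : Measure Ω) (T : ℕ) (E : Ω → ℕ)
    (Ye : ℕ → ℕ → Ω → ℝ) (Yinf : ℕ → Ω → ℝ) (L : Finset ℤ) : {x // x ∈ L} → ℝ :=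
  Matrix.mulVec (VD μ T E L)⁻¹ (bvec μ T E Ye Yinf L)

/-- The weight `ω(l; e, l') := (V_D⁻¹·c(e,l'))_l`. -/
def omegaFE {Ω : Type*} [MeasurableSpace Ω] (μ : Measure Ω) (T : ℕ) (E : Ω → ℕ)
    (L : Finset ℤ) (l : {x // x ∈ L}) (e : ℕ) (l' : ℤ) : ℝ :=
  Matrix.mulVec (VD μ T E L)⁻¹ (cvec μ T E L e l') l

/-!
Almost surely exactly one cohort indicator `1{E = e}` is on, so summing `c(e, l')` over the
cohorts gives `Σ_t E[D̈_t · D^{l'}_t]`. Each `D̈_t` has mean zero and `Σ_t D̈_t = 0`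
pointwise, so `D̈` is orthogonal to every two-way fixed-effect term `a_t + g(ω)`; since
`D^{l'}_t` differs from `D̈^{l'}_t` by such a term, the cohort sum is the `l'`-th column of
`V_D`, and `Σ_e ω(·; e, l') = (V_D⁻¹ V_D)_{·, l'}`.
-/

open Finset
open scoped ENNReal

section TwoWayDemeaning

variable {Ω : Type*} [MeasurableSpace Ω] {μ : Measure Ω}

-- `ddotRel μ T E l` is `twoWayDemean μ T (Drel E l)` by definition.
def twoWayDemean (μ : Measure Ω) (n : ℕ) (X : ℕ → Ω → ℝ) (t : ℕ) (ω : Ω) : ℝ :=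
  X t ω - (∫ ω', X t ω' ∂μ)
    - (1 / ((n : ℝ) + 1)) * ∑ s ∈ range (n + 1), X s ω
    + (1 / ((n : ℝ) + 1)) * ∑ s ∈ range (n + 1), ∫ ω', X s ω' ∂μ

theorem sum_twoWayDemean_eq_zero (n : ℕ) (X : ℕ → Ω → ℝ) (ω : Ω) :
    ∑ t ∈ range (n + 1), twoWayDemean μ n X t ω = 0 := by
  simp only [twoWayDemean, sum_add_distrib, sum_sub_distrib, sum_const, card_range, nsmul_eq_mul]
  push_cast
  field_simp
  ring

theorem integral_twoWayDemean_eq_zero [IsProbabilityMeasure μ] {n : ℕ} {X : ℕ → Ω → ℝ}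
    (hX : ∀ s, Integrable (X s) μ) (t : ℕ) :
    ∫ ω, twoWayDemean μ n X t ω ∂μ = 0 := by
  set g := fun ω => (1 / ((n : ℝ) + 1)) * ∑ s ∈ range (n + 1), X s ω
  have hg : Integrable g μ := (integrable_finsetSum _ fun s _ => hX s).const_mul _
  have hdecomp : twoWayDemean μ n X t
      = fun ω => (X t ω - g ω) - ((∫ ω', X t ω' ∂μ) - ∫ ω', g ω' ∂μ) := by
    ext ω
    simp only [twoWayDemean, g, integral_const_mul, integral_finsetSum _ fun s _ => hX s]
    ring
  rw [hdecomp, integral_sub (f := fun ω => X t ω - g ω) ((hX t).sub hg) (integrable_const _),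
    integral_sub (hX t) hg]
  simp

theorem memLp_twoWayDemean [IsFiniteMeasure μ] {p : ℝ≥0∞} {n : ℕ} {X : ℕ → Ω → ℝ}
    (hX : ∀ s, MemLp (X s) p μ) (t : ℕ) : MemLp (twoWayDemean μ n X t) p μ :=
  (((hX t).sub (memLp_const _)).sub ((memLp_finsetSum _ fun s _ => hX s).const_mul _)).add
    (memLp_const _)

theorem sum_integral_mul_fixedEffect_eq_zero [IsFiniteMeasure μ] {n : ℕ} {Z : ℕ → Ω → ℝ}
    (hZ : ∀ t, MemLp (Z t) ∞ μ) (hZ_mean : ∀ t, ∫ ω, Z t ω ∂μ = 0)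
    (hZ_sum : ∀ ω, ∑ t ∈ range (n + 1), Z t ω = 0) (c : ℕ → ℝ) {g : Ω → ℝ}
    (hg : Integrable g μ) :
    ∑ t ∈ range (n + 1), ∫ ω, Z t ω * (c t + g ω) ∂μ = 0 := by
  have hZg : ∀ t, Integrable (fun ω => Z t ω * g ω) μ := fun t => hg.mul_of_top_right (hZ t)
  calc ∑ t ∈ range (n + 1), ∫ ω, Z t ω * (c t + g ω) ∂μ
      = ∑ t ∈ range (n + 1), ∫ ω, Z t ω * g ω ∂μ := by
        refine sum_congr rfl fun t _ => ?_
        simp_rw [mul_add]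
        rw [integral_add (((hZ t).integrable le_top).mul_const _) (hZg t), integral_mul_const,
          hZ_mean, zero_mul, zero_add]
    _ = ∫ ω, (∑ t ∈ range (n + 1), Z t ω) * g ω ∂μ := by
        simp_rw [sum_mul]
        exact (integral_finsetSum _ fun t _ => hZg t).symm
    _ = 0 := by simp [hZ_sum]

theorem sum_integral_mul_twoWayDemean [IsFiniteMeasure μ] {n : ℕ} {Z X : ℕ → Ω → ℝ}
    (hZ : ∀ t, MemLp (Z t) ∞ μ) (hZ_mean : ∀ t, ∫ ω, Z t ω ∂μ = 0)
    (hZ_sum : ∀ ω, ∑ t ∈ range (n + 1), Z t ω = 0) (hX : ∀ t, Integrable (X t) μ) :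
    ∑ t ∈ range (n + 1), ∫ ω, Z t ω * twoWayDemean μ n X t ω ∂μ
      = ∑ t ∈ range (n + 1), ∫ ω, Z t ω * X t ω ∂μ := by
  set k := (1 / ((n : ℝ) + 1)) * ∑ s ∈ range (n + 1), ∫ ω, X s ω ∂μ
  set g := fun ω => (1 / ((n : ℝ) + 1)) * ∑ s ∈ range (n + 1), X s ω
  have hg : Integrable g μ := (integrable_finsetSum _ fun s _ => hX s).const_mul _
  have hdd : ∀ t, Integrable (twoWayDemean μ n X t) μ := fun t =>
    memLp_one_iff_integrable.mp
      (memLp_twoWayDemean (fun s => memLp_one_iff_integrable.mpr (hX s)) t)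
  have hdecomp : ∀ t ω, X t ω = twoWayDemean μ n X t ω + ((∫ ω', X t ω' ∂μ - k) + g ω) := by
    intro t ω; simp only [twoWayDemean, g, k]; ring
  calc ∑ t ∈ range (n + 1), ∫ ω, Z t ω * twoWayDemean μ n X t ω ∂μ
      = ∑ t ∈ range (n + 1), ∫ ω, Z t ω * twoWayDemean μ n X t ω ∂μ
        + ∑ t ∈ range (n + 1), ∫ ω, Z t ω * ((∫ ω', X t ω' ∂μ - k) + g ω) ∂μ := by
        rw [sum_integral_mul_fixedEffect_eq_zero hZ hZ_mean hZ_sum _ hg, add_zero]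
    _ = ∑ t ∈ range (n + 1), ∫ ω, Z t ω * X t ω ∂μ := by
        rw [← sum_add_distrib]
        refine sum_congr rfl fun t _ => ?_
        rw [← integral_add (f := fun ω => Z t ω * twoWayDemean μ n X t ω)
          ((hdd t).mul_of_top_right (hZ t))
          (g := fun ω => Z t ω * ((∫ ω', X t ω' ∂μ - k) + g ω))
          (((integrable_const _).add hg).mul_of_top_right (hZ t))]
        simp_rw [← mul_add, ← hdecomp t]

end TwoWayDemeaning

section CohortSums

variable {Ω : Type*} [MeasurableSpace Ω] {μ : Measure Ω}

theorem sum_integral_ite_mul_of_ae_mem {α : Type*} [MeasurableSpace α]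
    [MeasurableSingletonClass α] [DecidableEq α] {E : Ω → α} (hE : Measurable E)
    {s : Finset α} (hs : ∀ᵐ ω ∂μ, E ω ∈ s) {f : Ω → ℝ} (hf : Integrable f μ) :
    ∑ e ∈ s, ∫ ω, (if E ω = e then 1 else 0) * f ω ∂μ = ∫ ω, f ω ∂μ := by
  have hint : ∀ e ∈ s, Integrable (fun ω => (if E ω = e then (1 : ℝ) else 0) * f ω) μ :=
    fun e _ => hf.bdd_mul (c := 1)
      ((Measurable.ite (hE (measurableSet_singleton e)) measurable_const
        measurable_const).aestronglyMeasurable)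
      (ae_of_all _ fun ω => by split <;> simp)
  rw [← integral_finsetSum _ hint]
  refine integral_congr_ae ?_
  filter_upwards [hs] with ω hω
  simp [hω]

end CohortSums

section RelativeTimeIndicators

variable {Ω : Type*} [MeasurableSpace Ω] {μ : Measure Ω} {E : Ω → ℕ}

theorem memLp_Drel (hE : Measurable E) (l : ℤ) (t : ℕ) : MemLp (Drel E l t) ∞ μ :=
  memLp_top_of_bound
    (((Measurable.of_discrete (f := fun n : ℕ => if (t : ℤ) - n = l then (1 : ℝ) else 0)).comp
      hE).aestronglyMeasurable)
    1 (ae_of_all _ fun ω => by unfold Drel; split <;> simp)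

theorem memLp_ddotRel [IsFiniteMeasure μ] (hE : Measurable E) (T : ℕ) (l : ℤ) (t : ℕ) :
    MemLp (ddotRel μ T E l t) ∞ μ :=
  memLp_twoWayDemean (fun s => memLp_Drel hE l s) t

theorem integrable_Drel [IsFiniteMeasure μ] (hE : Measurable E) (l : ℤ) (t : ℕ) :
    Integrable (Drel E l t) μ :=
  (memLp_Drel hE l t).integrable le_top

theorem sum_integral_ddotRel_mul_Drel [IsProbabilityMeasure μ] (hE : Measurable E) (T : ℕ)
    (l l' : ℤ) :
    ∑ t ∈ range (T + 1), ∫ ω, ddotRel μ T E l t ω * Drel E l' t ω ∂μ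
      = ∑ t ∈ range (T + 1), ∫ ω, ddotRel μ T E l t ω * ddotRel μ T E l' t ω ∂μ :=
  (sum_integral_mul_twoWayDemean (memLp_ddotRel hE T l)
    (integral_twoWayDemean_eq_zero fun s => integrable_Drel hE l s)
    (sum_twoWayDemean_eq_zero T _) (integrable_Drel hE l')).symm

theorem sum_cvec_eq_VD_column [IsProbabilityMeasure μ] (hE : Measurable E) {T : ℕ}
    (hsupp : ∀ᵐ ω ∂μ, E ω ∈ Icc 1 T) (L : Finset ℤ) (l' : L) :
    ∑ e ∈ Icc 1 T, cvec μ T E L e l' = fun l => VD μ T E L l l' := by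
  ext l
  simp only [Finset.sum_apply, cvec, VD]
  rw [sum_comm, ← sum_integral_ddotRel_mul_Drel hE]
  refine sum_congr rfl fun t _ => ?_
  simp only [mul_left_comm (ddotRel μ T E l t _)]
  exact sum_integral_ite_mul_of_ae_mem hE hsupp
    ((integrable_Drel hE l' t).mul_of_top_right (memLp_ddotRel hE T l t))

end RelativeTimeIndicators

theorem dynamic_fe_weight_sums_general
    {Ω : Type*} [MeasurableSpace Ω] (μ : Measure Ω) [IsProbabilityMeasure μ]
    (T : ℕ)
    (E : Ω → ℕ) (hE : Measurable E)
    (hsupp : μ {ω | 1 ≤ E ω ∧ E ω ≤ T} = 1)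
    (L : Finset ℤ)
    (hVD : IsUnit (VD μ T E L).det) :
    ∀ l l' : {x // x ∈ L},
      ∑ e ∈ Finset.Icc 1 T, omegaFE μ T E L l e (l' : ℤ)
        = if (l : ℤ) = (l' : ℤ) then 1 else 0 := by
  have hE_mem : ∀ᵐ ω ∂μ, E ω ∈ Icc 1 T := by
    rw [ae_iff_measure_eq (p := fun ω => E ω ∈ Icc 1 T)
      (hE MeasurableSet.of_discrete).nullMeasurableSet]
    simpa [mem_Icc] using hsupp
  intro l l'
  calc ∑ e ∈ Icc 1 T, omegaFE μ T E L l e l'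
      = Matrix.mulVec (VD μ T E L)⁻¹ (∑ e ∈ Icc 1 T, cvec μ T E L e l') l := by
        simp only [omegaFE, Matrix.mulVec_sum, Finset.sum_apply]
    _ = ((VD μ T E L)⁻¹ * VD μ T E L) l l' := by rw [sum_cvec_eq_VD_column hE hE_mem L l']; rfl
    _ = if (l : ℤ) = (l' : ℤ) then 1 else 0 := by
        rw [Matrix.nonsing_inv_mul _ hVD, Matrix.one_apply]
        exact if_congr Subtype.ext_iff rfl rfl

/-- Weight-sum claims of Proposition 2: summed over cohorts, the own-period weights sum to
one and the other-period weights sum to zero. -/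
theorem dynamic_fe_weight_sums
    {Ω : Type*} [MeasurableSpace Ω] (μ : Measure Ω) [IsProbabilityMeasure μ]
    (T : ℕ) (hT : 1 ≤ T)
    (E : Ω → ℕ) (hE : Measurable E)
    (hsupp : μ {ω | 1 ≤ E ω ∧ E ω ≤ T} = 1)
    (hpos : ∀ e ∈ Finset.Icc 1 T, 0 < μ {ω | E ω = e})
    (L : Finset ℤ) (hL1 : L ⊆ Finset.Icc (-(T : ℤ)) ((T : ℤ) - 1))
    (hL2 : Finset.Icc (0 : ℤ) ((T : ℤ) - 1) ⊆ L)
    (hVD : IsUnit (VD μ T E L).det) :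
    ∀ l l' : {x // x ∈ L},
      ∑ e ∈ Finset.Icc 1 T, omegaFE μ T E L l e (l' : ℤ)
        = if (l : ℤ) = (l' : ℤ) then 1 else 0 :=
  dynamic_fe_weight_sums_general μ T E hE hsupp L hVD

end
end

section
/- Assume parallel trends (PT) and no anticipation (NA), assume V_D is invertible, and assume treatment effects are stationary: there exist τ_{l'} ∈ ℝ for 0 ≤ l' ≤ T−1 such that CATT(e,l') = τ_{l'} for every e ∈ {1,…,T} with l' ≤ T−e. Then for every l ∈ L with l ≥ 0, μ_l = τ_l, and for every l ∈ L with l < 0, μ_l = 0. (Stationary special case of Proposition 2: under stationary treatment effects the dynamic FE lag coefficients recover the common lagged effects and the lead coefficients are zero.) -/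
open MeasureTheory Filter

noncomputable section

/-!
Every demeaned regressor `D̈ˡ_t` is a function of the cohort `E`, so all moments reduce to finite
sums over cohorts weighted by `P(E = e)`: `V_D` and `Σ_t E[D̈_t Y_t]` become weighted pairings of
two-way demeaned cohort-time arrays with the relative-time indicators and with the cohort means
`E[Y_t | E = e]`. A two-way demeaned array is orthogonal to every additive array `α_e + β_t`, and
under PT, NA and stationarity `E[Y_t | E = e] = Σ_{l ≥ 0} τ_l 1{t - e = l} + α_e + β_t`. Hence
`Σ_t E[D̈_t Y_t] = V_D θ` with `θ_l = τ_l` for lags and `θ_l = 0` for leads, and `μ = θ`.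
-/

namespace DynamicFE

open Finset

section TwoWay

variable {ι κ : Type*} (C : Finset ι) (S : Finset κ) (p : ι → ℝ)

def weightedPairing (f g : ι → κ → ℝ) : ℝ :=
  ∑ t ∈ S, ∑ e ∈ C, p e * f e t * g e t

def twoWayDemean (d : ι → κ → ℝ) (e : ι) (t : κ) : ℝ :=
  d e t - ∑ e' ∈ C, p e' * d e' t
    - 1 / (#S : ℝ) * ∑ s ∈ S, d e s + 1 / (#S : ℝ) * ∑ s ∈ S, ∑ e' ∈ C, p e' * d e' s

variable {C S p}

theorem sum_twoWayDemean (hS : S.Nonempty) (d : ι → κ → ℝ) (e : ι) :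
    ∑ t ∈ S, twoWayDemean C S p d e t = 0 := by
  have hcard : (#S : ℝ) ≠ 0 := by exact_mod_cast hS.card_pos.ne'
  simp only [twoWayDemean, sum_add_distrib, sum_sub_distrib, sum_const, nsmul_eq_mul]
  field_simp
  ring

theorem sum_mul_twoWayDemean (hp : ∑ e ∈ C, p e = 1) (d : ι → κ → ℝ) (t : κ) :
    ∑ e ∈ C, p e * twoWayDemean C S p d e t = 0 := by
  have hswap : ∑ e ∈ C, p e * ∑ s ∈ S, d e s = ∑ s ∈ S, ∑ e ∈ C, p e * d e s := by
    simp only [mul_sum]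
    exact sum_comm
  have expand : ∀ e, p e * twoWayDemean C S p d e t =
      p e * d e t - p e * ∑ e' ∈ C, p e' * d e' t - 1 / (#S : ℝ) * (p e * ∑ s ∈ S, d e s)
        + p e * (1 / (#S : ℝ) * ∑ s ∈ S, ∑ e' ∈ C, p e' * d e' s) := fun e => by
    simp only [twoWayDemean]
    ring
  simp only [expand, sum_add_distrib, sum_sub_distrib, ← sum_mul, ← mul_sum, hswap, hp]
  ring

theorem weightedPairing_twoWayDemean_add_additive (hS : S.Nonempty) (hp : ∑ e ∈ C, p e = 1)
    (d g : ι → κ → ℝ) (α : ι → ℝ) (β : κ → ℝ) :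
    weightedPairing C S p (twoWayDemean C S p d) (fun e t => g e t + (α e + β t)) =
      weightedPairing C S p (twoWayDemean C S p d) g := by
  have hα : ∑ t ∈ S, ∑ e ∈ C, p e * twoWayDemean C S p d e t * α e = 0 := by
    rw [sum_comm]
    refine sum_eq_zero fun e _ => ?_
    simp only [mul_comm (p e), mul_assoc, ← sum_mul, sum_twoWayDemean hS, zero_mul]
  have hβ : ∑ t ∈ S, ∑ e ∈ C, p e * twoWayDemean C S p d e t * β t = 0 :=
    sum_eq_zero fun t _ => by rw [← sum_mul, sum_mul_twoWayDemean hp, zero_mul]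
  simp only [weightedPairing, mul_add, sum_add_distrib, hα, hβ, add_zero]

theorem weightedPairing_twoWayDemean_twoWayDemean (hS : S.Nonempty) (hp : ∑ e ∈ C, p e = 1)
    (d d' : ι → κ → ℝ) :
    weightedPairing C S p (twoWayDemean C S p d) (twoWayDemean C S p d') =
      weightedPairing C S p (twoWayDemean C S p d) d' := by
  rw [← weightedPairing_twoWayDemean_add_additive hS hp d (twoWayDemean C S p d')
    (fun e => 1 / (#S : ℝ) * ∑ s ∈ S, d' e s)
    (fun t => ∑ e' ∈ C, p e' * d' e' t - 1 / (#S : ℝ) * ∑ s ∈ S, ∑ e' ∈ C, p e' * d' e' s)]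
  congr 1
  funext e t
  simp only [twoWayDemean]
  ring

theorem weightedPairing_sum_right {ν : Type*} (I : Finset ν) (f : ι → κ → ℝ) (c : ν → ℝ)
    (g : ν → ι → κ → ℝ) :
    weightedPairing C S p f (fun e t => ∑ i ∈ I, c i * g i e t) =
      ∑ i ∈ I, c i * weightedPairing C S p f (g i) := by
  simp only [weightedPairing, mul_sum]
  rw [sum_comm (s := I)]
  refine sum_congr rfl fun t _ => ?_
  rw [sum_comm (s := I)]
  exact sum_congr rfl fun e _ => sum_congr rfl fun i _ => by ring

theorem weightedPairing_congr_right {f g g' : ι → κ → ℝ} (h : ∀ e ∈ C, ∀ t ∈ S, g e t = g' e t) :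
    weightedPairing C S p f g = weightedPairing C S p f g' :=
  sum_congr rfl fun t ht => sum_congr rfl fun e he => by rw [h e he t ht]

end TwoWay

section Cohorts

variable {Ω : Type*} [MeasurableSpace Ω] {μ : Measure Ω} {T : ℕ} {E : Ω → ℕ}

theorem setIntegral_eq_measureReal_mul_cexp [IsFiniteMeasure μ] (Z : Ω → ℝ) (A : Set Ω) :
    ∫ ω in A, Z ω ∂μ = μ.real A * cexp μ Z A := by
  by_cases hA : μ.real A = 0
  · rw [setIntegral_measure_zero Z ((measureReal_eq_zero_iff (measure_ne_top μ A)).1 hA), hA,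
      zero_mul]
  · exact (mul_div_cancel₀ _ hA).symm

theorem cexp_sub {Z Z' : Ω → ℝ} {A : Set Ω} (hZ : IntegrableOn Z A μ)
    (hZ' : IntegrableOn Z' A μ) :
    cexp μ (fun ω => Z ω - Z' ω) A = cexp μ Z A - cexp μ Z' A := by
  rw [cexp, cexp, cexp, integral_sub hZ hZ', sub_div]

theorem cexp_congr {Z Z' : Ω → ℝ} {A : Set Ω} (hA : MeasurableSet A) (h : Set.EqOn Z Z' A) :
    cexp μ Z A = cexp μ Z' A := by
  rw [cexp, cexp, setIntegral_congr_fun hA h]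

variable [IsProbabilityMeasure μ]

theorem integral_comp_mul_eq_sum (hE : Measurable E) (hsupp : μ {ω | 1 ≤ E ω ∧ E ω ≤ T} = 1)
    (f : ℕ → ℝ) {X : Ω → ℝ} (hX : Integrable X μ) :
    ∫ ω, f (E ω) * X ω ∂μ = ∑ e ∈ Icc 1 T, f e * ∫ ω in {ω | E ω = e}, X ω ∂μ := by
  have hcohort : ∀ e, MeasurableSet {ω | E ω = e} := fun e => hE (measurableSet_singleton e)
  have hmem : ∀ᵐ ω ∂μ, 1 ≤ E ω ∧ E ω ≤ T := by
    have hS : MeasurableSet {ω | 1 ≤ E ω ∧ E ω ≤ T} := hE measurableSet_Icc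
    rwa [ae_iff_measure_eq hS.nullMeasurableSet, measure_univ]
  have hsplit : (fun ω => f (E ω) * X ω) =ᵐ[μ]
      fun ω => ∑ e ∈ Icc 1 T, {ω | E ω = e}.indicator (fun ω => f e * X ω) ω := by
    filter_upwards [hmem] with ω hω
    simp only [Set.indicator_apply, Set.mem_ofPred_eq, sum_ite_eq, mem_Icc, hω, and_self,
      if_true]
  rw [integral_congr_ae hsplit,
    integral_finsetSum _ fun e _ => (hX.const_mul (f e)).indicator (hcohort e)]
  exact sum_congr rfl fun e _ => by rw [integral_indicator (hcohort e), integral_const_mul]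

theorem integral_comp_eq_sum (hE : Measurable E) (hsupp : μ {ω | 1 ≤ E ω ∧ E ω ≤ T} = 1)
    (f : ℕ → ℝ) :
    ∫ ω, f (E ω) ∂μ = ∑ e ∈ Icc 1 T, μ.real {ω | E ω = e} * f e := by
  simpa [setIntegral_const, mul_comm] using
    integral_comp_mul_eq_sum hE hsupp f (integrable_const (1 : ℝ))

theorem sum_measureReal_cohort (hE : Measurable E) (hsupp : μ {ω | 1 ≤ E ω ∧ E ω ≤ T} = 1) :
    ∑ e ∈ Icc 1 T, μ.real {ω | E ω = e} = 1 := by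
  simpa using (integral_comp_eq_sum hE hsupp (fun _ => (1 : ℝ))).symm

end Cohorts

def relInd (l : ℤ) (e t : ℕ) : ℝ := if (t : ℤ) - e = l then 1 else 0

def stationaryCoeff (τ : ℕ → ℝ) (l : ℤ) : ℝ := if 0 ≤ l then τ l.toNat else 0

theorem sum_stationaryCoeff_mul_relInd {T : ℕ} {L : Finset ℤ}
    (hL : Icc (0 : ℤ) ((T : ℤ) - 1) ⊆ L) (τ : ℕ → ℝ) {e t : ℕ} (he : 1 ≤ e) (ht : t ≤ T) :
    ∑ l : L, stationaryCoeff τ l * relInd l e t = if e ≤ t then τ (t - e) else 0 := by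
  rw [sum_coe_sort L (fun l => stationaryCoeff τ l * relInd l e t)]
  simp only [relInd, mul_ite, mul_one, mul_zero, sum_ite_eq]
  by_cases het : e ≤ t
  · have hmem : (t : ℤ) - e ∈ L := hL (mem_Icc.mpr ⟨by omega, by omega⟩)
    rw [if_pos hmem, if_pos het, stationaryCoeff, if_pos (by omega)]
    congr
    omega
  · have hlead : stationaryCoeff τ ((t : ℤ) - e) = 0 := if_neg (by omega)
    rw [hlead, if_neg het, ite_self]

theorem obsY_eq_Ye {Ω : Type*} {T : ℕ} {E : Ω → ℕ} {Ye : ℕ → ℕ → Ω → ℝ} {Yinf : ℕ → Ω → ℝ}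
    {e : ℕ} (he : e ∈ Icc 1 T) {ω : Ω} (hω : E ω = e) (t : ℕ) :
    obsY T E Ye Yinf t ω = Ye e t ω := by
  simp only [obsY, hω, mul_ite, mul_one, mul_zero, sum_ite_eq, if_pos he]
  ring

section Estimand

variable {Ω : Type*} [MeasurableSpace Ω] (μ : Measure Ω) (T : ℕ) (E : Ω → ℕ)

abbrev demeanedInd (l : ℤ) : ℕ → ℕ → ℝ :=
  twoWayDemean (Icc 1 T) (range (T + 1)) (fun e => μ.real {ω | E ω = e}) (relInd l)

variable {μ T E} [IsProbabilityMeasure μ]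

theorem ddotRel_eq_demeanedInd (hE : Measurable E) (hsupp : μ {ω | 1 ≤ E ω ∧ E ω ≤ T} = 1)
    (l : ℤ) (t : ℕ) (ω : Ω) : ddotRel μ T E l t ω = demeanedInd μ T E l (E ω) t := by
  have hmean : ∀ s, ∫ ω', Drel E l s ω' ∂μ =
      ∑ e ∈ Icc 1 T, μ.real {ω | E ω = e} * relInd l e s :=
    fun s => integral_comp_eq_sum hE hsupp (fun n => relInd l n s)
  simp only [ddotRel, demeanedInd, twoWayDemean, hmean, card_range]
  push_cast
  rfl

theorem VD_apply (hE : Measurable E) (hsupp : μ {ω | 1 ≤ E ω ∧ E ω ≤ T} = 1) (L : Finset ℤ)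
    (l l' : L) :
    VD μ T E L l l' = weightedPairing (Icc 1 T) (range (T + 1)) (fun e => μ.real {ω | E ω = e})
      (demeanedInd μ T E l) (demeanedInd μ T E l') := by
  refine sum_congr rfl fun t _ => ?_
  simp only [ddotRel_eq_demeanedInd hE hsupp]
  rw [integral_comp_eq_sum hE hsupp (fun n => demeanedInd μ T E l n t * demeanedInd μ T E l' n t)]
  exact sum_congr rfl fun e _ => by ring

theorem bvec_apply (hE : Measurable E) (hsupp : μ {ω | 1 ≤ E ω ∧ E ω ≤ T} = 1)
    {Ye : ℕ → ℕ → Ω → ℝ} {Yinf : ℕ → Ω → ℝ} (hY : ∀ t ≤ T, Integrable (obsY T E Ye Yinf t) μ)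
    (L : Finset ℤ) (l : L) :
    bvec μ T E Ye Yinf L l = weightedPairing (Icc 1 T) (range (T + 1))
      (fun e => μ.real {ω | E ω = e}) (demeanedInd μ T E l)
      (fun e t => cexp μ (obsY T E Ye Yinf t) {ω | E ω = e}) := by
  refine sum_congr rfl fun t ht => ?_
  simp only [ddotRel_eq_demeanedInd hE hsupp]
  rw [integral_comp_mul_eq_sum hE hsupp (fun n => demeanedInd μ T E l n t)
    (hY t (mem_range_succ_iff.mp ht))]
  exact sum_congr rfl fun e _ => by rw [setIntegral_eq_measureReal_mul_cexp]; ring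

end Estimand

section Identification

variable {Ω : Type*} [MeasurableSpace Ω] {μ : Measure Ω} {T : ℕ} {E : Ω → ℕ}
  {Ye : ℕ → ℕ → Ω → ℝ} {Yinf : ℕ → Ω → ℝ}

theorem integrable_obsY (hE : Measurable E) {t : ℕ}
    (hYe : ∀ e ∈ Icc 1 T, Integrable (Ye e t) μ) (hYinf : Integrable (Yinf t) μ) :
    Integrable (obsY T E Ye Yinf t) μ := by
  refine hYinf.add (integrable_finsetSum _ fun e he => ?_)
  refine (((hYe e he).sub hYinf).indicator (hE (measurableSet_singleton e))).congr
    (ae_of_all _ fun ω => ?_)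
  by_cases hω : E ω = e <;> simp [hω]

theorem cexp_effect_eq (hNA : NA μ T Ye Yinf) {τ : ℕ → ℝ}
    (hstat : ∀ e ∈ Icc 1 T, ∀ l' : ℕ, l' ≤ T - e → CATT μ E Ye Yinf e (l' : ℤ) = τ l')
    {e : ℕ} (he : e ∈ Icc 1 T) {t : ℕ} (ht : t ≤ T) :
    cexp μ (fun ω => Ye e t ω - Yinf t ω) {ω | E ω = e} = if e ≤ t then τ (t - e) else 0 := by
  by_cases het : e ≤ t
  · have hlag : ((e : ℤ) + ((t - e : ℕ) : ℤ)).toNat = t := by omega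
    have h := hstat e he (t - e) (by omega)
    rw [if_pos het]
    rwa [CATT, hlag] at h
  · have hzero : (fun ω => Ye e t ω - Yinf t ω) =ᵐ[μ] 0 :=
      (hNA e he t (by omega)).mono fun ω hω => sub_eq_zero.mpr hω
    rw [if_neg het, cexp, integral_eq_zero_of_ae (ae_restrict_of_ae hzero), zero_div]

theorem cexp_obsY_eq (hE : Measurable E) (hYe : ∀ e ∈ Icc 1 T, ∀ t ≤ T, Integrable (Ye e t) μ)
    (hYinf : ∀ t ≤ T, Integrable (Yinf t) μ) (hPT : PT μ T E Yinf) (hNA : NA μ T Ye Yinf)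
    {τ : ℕ → ℝ}
    (hstat : ∀ e ∈ Icc 1 T, ∀ l' : ℕ, l' ≤ T - e → CATT μ E Ye Yinf e (l' : ℤ) = τ l')
    {e : ℕ} (he : e ∈ Icc 1 T) {t : ℕ} (ht : t ≤ T) :
    cexp μ (obsY T E Ye Yinf t) {ω | E ω = e} = (if e ≤ t then τ (t - e) else 0) +
      (cexp μ (Yinf 0) {ω | E ω = e} + ∫ ω, (Yinf t ω - Yinf 0 ω) ∂μ) := by
  have hY0 := hYinf 0 (Nat.zero_le T)
  have htrend := hPT e he 0 (Nat.zero_le T) t ht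
  rw [cexp_sub (hYinf t ht).integrableOn hY0.integrableOn] at htrend
  calc cexp μ (obsY T E Ye Yinf t) {ω | E ω = e}
      = cexp μ (Ye e t) {ω | E ω = e} :=
        cexp_congr (hE (measurableSet_singleton e)) fun ω hω => obsY_eq_Ye he hω t
    _ = cexp μ (fun ω => Ye e t ω - Yinf t ω) {ω | E ω = e} + cexp μ (Yinf t) {ω | E ω = e} := by
        rw [cexp_sub (hYe e he t ht).integrableOn (hYinf t ht).integrableOn]
        ring
    _ = _ := by rw [cexp_effect_eq hNA hstat he ht, ← htrend]; ring

end Identification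

theorem bvec_eq_VD_mulVec {Ω : Type*} [MeasurableSpace Ω] {μ : Measure Ω}
    [IsProbabilityMeasure μ] {T : ℕ} {E : Ω → ℕ} (hE : Measurable E)
    (hsupp : μ {ω | 1 ≤ E ω ∧ E ω ≤ T} = 1) {Ye : ℕ → ℕ → Ω → ℝ} {Yinf : ℕ → Ω → ℝ}
    (hYe : ∀ e ∈ Icc 1 T, ∀ t ≤ T, Integrable (Ye e t) μ)
    (hYinf : ∀ t ≤ T, Integrable (Yinf t) μ) (hPT : PT μ T E Yinf) (hNA : NA μ T Ye Yinf)
    {L : Finset ℤ} (hL : Icc (0 : ℤ) ((T : ℤ) - 1) ⊆ L) {τ : ℕ → ℝ}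
    (hstat : ∀ e ∈ Icc 1 T, ∀ l' : ℕ, l' ≤ T - e → CATT μ E Ye Yinf e (l' : ℤ) = τ l') :
    bvec μ T E Ye Yinf L = (VD μ T E L).mulVec fun l => stationaryCoeff τ l := by
  have hS : (range (T + 1)).Nonempty := ⟨0, mem_range.mpr T.succ_pos⟩
  have hp := sum_measureReal_cohort hE hsupp
  have hY : ∀ t ≤ T, Integrable (obsY T E Ye Yinf t) μ := fun t ht =>
    integrable_obsY hE (fun e he => hYe e he t ht) (hYinf t ht)
  funext l
  rw [bvec_apply hE hsupp hY, weightedPairing_congr_right (g' := fun e t =>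
      ∑ l' : L, stationaryCoeff τ l' * relInd l' e t +
        (cexp μ (Yinf 0) {ω | E ω = e} + ∫ ω, (Yinf t ω - Yinf 0 ω) ∂μ)) fun e he t ht => by
      rw [cexp_obsY_eq hE hYe hYinf hPT hNA hstat he (mem_range_succ_iff.mp ht),
        sum_stationaryCoeff_mul_relInd hL τ (mem_Icc.mp he).1
          (mem_range_succ_iff.mp ht)],
    weightedPairing_twoWayDemean_add_additive hS hp, weightedPairing_sum_right]
  simp only [Matrix.mulVec, dotProduct, VD_apply hE hsupp,
    weightedPairing_twoWayDemean_twoWayDemean hS hp, mul_comm (stationaryCoeff τ _)]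

end DynamicFE

theorem dynamic_fe_stationary_case_general
    {Ω : Type*} [MeasurableSpace Ω] (μ : Measure Ω) [IsProbabilityMeasure μ]
    (T : ℕ)
    (E : Ω → ℕ) (hE : Measurable E)
    (hsupp : μ {ω | 1 ≤ E ω ∧ E ω ≤ T} = 1)
    (Ye : ℕ → ℕ → Ω → ℝ) (Yinf : ℕ → Ω → ℝ)
    (hL2e : ∀ e ∈ Finset.Icc 1 T, ∀ t ≤ T, MemLp (Ye e t) 2 μ)
    (hL2inf : ∀ t ≤ T, MemLp (Yinf t) 2 μ)
    (hPT : PT μ T E Yinf) (hNA : NA μ T Ye Yinf)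
    (L : Finset ℤ)
    (hL2 : Finset.Icc (0 : ℤ) ((T : ℤ) - 1) ⊆ L)
    (hVD : IsUnit (VD μ T E L).det)
    (τ : ℕ → ℝ)
    (hstat : ∀ e ∈ Finset.Icc 1 T, ∀ l' : ℕ, l' ≤ T - e →
      CATT μ E Ye Yinf e (l' : ℤ) = τ l') :
    ∀ l : {x // x ∈ L},
      (0 ≤ (l : ℤ) → muFE μ T E Ye Yinf L l = τ (l : ℤ).toNat)
        ∧ ((l : ℤ) < 0 → muFE μ T E Ye Yinf L l = 0) := by
  have hb := DynamicFE.bvec_eq_VD_mulVec hE hsupp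
    (fun e he t ht => (hL2e e he t ht).integrable one_le_two)
    (fun t ht => (hL2inf t ht).integrable one_le_two) hPT hNA hL2 hstat
  have hmu : muFE μ T E Ye Yinf L = fun l : L => DynamicFE.stationaryCoeff τ l := by
    rw [muFE, hb, Matrix.mulVec_mulVec, Matrix.nonsing_inv_mul _ hVD, Matrix.one_mulVec]
  intro l
  simp only [hmu, DynamicFE.stationaryCoeff]
  exact ⟨fun hl => if_pos hl, fun hl => if_neg (not_le.mpr hl)⟩

/-- Stationary special case of Proposition 2: under stationary treatment effects the dynamic
FE lag coefficients recover the common lagged effects and the lead coefficients are zero. -/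
theorem dynamic_fe_stationary_case
    {Ω : Type*} [MeasurableSpace Ω] (μ : Measure Ω) [IsProbabilityMeasure μ]
    (T : ℕ) (hT : 1 ≤ T)
    (E : Ω → ℕ) (hE : Measurable E)
    (hsupp : μ {ω | 1 ≤ E ω ∧ E ω ≤ T} = 1)
    (hpos : ∀ e ∈ Finset.Icc 1 T, 0 < μ {ω | E ω = e})
    (Ye : ℕ → ℕ → Ω → ℝ) (Yinf : ℕ → Ω → ℝ)
    (hL2e : ∀ e ∈ Finset.Icc 1 T, ∀ t ≤ T, MemLp (Ye e t) 2 μ)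
    (hL2inf : ∀ t ≤ T, MemLp (Yinf t) 2 μ)
    (hPT : PT μ T E Yinf) (hNA : NA μ T Ye Yinf)
    (L : Finset ℤ) (hL1 : L ⊆ Finset.Icc (-(T : ℤ)) ((T : ℤ) - 1))
    (hL2 : Finset.Icc (0 : ℤ) ((T : ℤ) - 1) ⊆ L)
    (hVD : IsUnit (VD μ T E L).det)
    (τ : ℕ → ℝ)
    (hstat : ∀ e ∈ Finset.Icc 1 T, ∀ l' : ℕ, l' ≤ T - e →
      CATT μ E Ye Yinf e (l' : ℤ) = τ l') :
    ∀ l : {x // x ∈ L},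
      (0 ≤ (l : ℤ) → muFE μ T E Ye Yinf L l = τ (l : ℤ).toNat)
        ∧ ((l : ℤ) < 0 → muFE μ T E Ye Yinf L l = 0) :=
  dynamic_fe_stationary_case_general μ T E hE hsupp Ye Yinf hL2e hL2inf hPT hNA L hL2 hVD τ hstat

end
end
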